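/- (Structure condition for the HJB Hamiltonian.) Let Φ₀ > 0 and U = ℝ × (0,Φ₀) × (0,∞). Let σ̂, b̂ : [0,∞) → ℝ be Lipschitz continuous, let h : [0,∞) → [0,∞) be continuous and strictly increasing with lim_{ζ→∞} h(ζ) = ∞ and liminf_{ζ→∞} h(ζ)/ζ > 0, and let g(ζ) = ∫₀^ζ h(ζ') dζ'. For z = (z_w, z_φ, z_s) ∈ U, p = (p_w, p_φ, p_s) ∈ ℝ³ and a symmetric real 3×3 matrix X with entries X_{ij} (i,j ∈ {w,φ,s}), define F(z,p,X) = − sup_{ζ ≥ 0} { (1/2)·σ̂(z_s)²·X_{ss} + b̂(z_s)·p_s + ζ·(z_s·p_w − p_φ) − g(ζ)·z_s·p_s } ∈ [−∞,∞). Then there exists a constant C > 0, depending only on σ̂, b̂ and g, such that: for all α > 1, all z, z' ∈ U, and all symmetric real 3×3 matrices X, Y satisfying F(z', α(z−z'), Y) ≥ 0 and the block matrix inequality −3α·I₆ ≤ [[X, 0],[0, −Y]] ≤ 3α·[[I, −I],[−I, I]] (inequalities in the sense of symmetric 6×6 matrices, I the 3×3 identity), one has F(z, α(z−z'), X) > −∞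 and F(z', α(z−z'), Y) − F(z, α(z−z'), X) ≤ C·( α·|z−z'|² + |z−z'| ), where |z−z'| is the Euclidean norm on ℝ³. -/

import Mathlib

/-!
Write `F(z, p, X) = -sup_{ζ ≥ 0} f(z, p, X; ζ)` and put `p = α (z - z')`. Since
`F(z', p, Y) ≥ 0`, the function `f(z', p, Y; ·)` is nonpositive, so everything follows from the
uniform bound `f(z, p, X; ζ) - f(z', p, Y; ζ) ≤ C α |z - z'|²`, which also shows that the supremum
defining `F(z, p, X)` is finite. In the difference, the diffusion term is controlled by testing the
upper block inequality against `(σ̂(z_s) e_s, σ̂(z'_s) e_s)` and the Lipschitz bound on `σ̂`, the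
drift term by the Lipschitz bound on `b̂`, and the remaining term
`α ((z_s - z'_s)(z_w - z'_w) ζ - (z_s - z'_s)² g(ζ))` by completing the square, using the
quadratic growth `g(ζ) ≥ a ζ² - c` inherited from the linear growth of `h`.
-/

/-- The HJB Hamiltonian `F(z, p, X)` of the optimal execution problem, with values
in `EReal` (it takes values in `[-∞, ∞)`): coordinates of `z, p ∈ ℝ³` are indexed
by `0 = w`, `1 = φ`, `2 = s`, and only the `ss` entry of `X` appears. -/
noncomputable def execHamiltonian (σ b g : ℝ → ℝ)
    (z p : EuclideanSpace ℝ (Fin 3)) (X : Matrix (Fin 3) (Fin 3) ℝ) : EReal :=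
  - sSup ((fun ζ : ℝ =>
      ((1 / 2 * σ (z 2) ^ 2 * X 2 2 + b (z 2) * p 2 +
        ζ * (z 2 * p 0 - p 1) - g ζ * z 2 * p 2 : ℝ) : EReal)) '' Set.Ici 0)

open Set

theorem EReal.sSup_image_coe {α : Type*} {s : Set α} (f : α → ℝ) (hs : s.Nonempty)
    (hf : BddAbove (f '' s)) :
    sSup ((fun x => (f x : EReal)) '' s) = ((sSup (f '' s) : ℝ) : EReal) := by
  obtain ⟨x₀, hx₀⟩ := hs
  set T := sSup ((fun x => (f x : EReal)) '' s)
  have hle : T ≤ ((sSup (f '' s) : ℝ) : EReal) :=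
    sSup_le <| forall_mem_image.2 fun x hx =>
      EReal.coe_le_coe_iff.2 (le_csSup hf (mem_image_of_mem f hx))
  have hx₀T : (f x₀ : EReal) ≤ T := le_sSup (mem_image_of_mem _ hx₀)
  lift T to ℝ using
    ⟨(hle.trans_lt (EReal.coe_lt_top _)).ne, ((EReal.bot_lt_coe _).trans_le hx₀T).ne'⟩ with t ht
  refine le_antisymm hle (EReal.coe_le_coe_iff.2 (csSup_le ⟨_, mem_image_of_mem f hx₀⟩ ?_))
  exact forall_mem_image.2 fun x hx =>
    EReal.coe_le_coe_iff.1 (ht ▸ le_sSup (mem_image_of_mem _ hx))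

theorem csSup_image_le_csSup_image_add {α : Type*} {f f' : α → ℝ} {s : Set α} {K : ℝ}
    (hs : s.Nonempty) (hf' : BddAbove (f' '' s)) (h : ∀ x ∈ s, f x ≤ f' x + K) :
    sSup (f '' s) ≤ sSup (f' '' s) + K :=
  csSup_le (hs.image f) <| forall_mem_image.2 fun x hx =>
    (h x hx).trans (add_le_add_left (le_csSup hf' (mem_image_of_mem f' hx)) K)

theorem exists_quadratic_lower_bound_intervalIntegral {h : ℝ → ℝ}
    (hcont : ContinuousOn h (Ici 0)) (hnonneg : ∀ x ≥ (0 : ℝ), 0 ≤ h x)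
    (hlin : ∃ ε > (0 : ℝ), ∃ ζ₁ : ℝ, ∀ ζ ≥ ζ₁, ε * ζ ≤ h ζ) :
    ∃ a > (0 : ℝ), ∃ c ≥ (0 : ℝ), ∀ ζ ≥ (0 : ℝ), a * ζ ^ 2 - c ≤ ∫ x in (0 : ℝ)..ζ, h x := by
  obtain ⟨ε, hε, ζ₁, hlin⟩ := hlin
  set ζ₂ := max ζ₁ 0
  have hζ₂ : 0 ≤ ζ₂ := le_max_right _ _
  have hlow : ∀ x ≥ (0 : ℝ), ε * x - ε * ζ₂ ≤ h x := by
    intro x hx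
    rcases le_or_gt ζ₁ x with h₁ | h₁
    · nlinarith [hlin x h₁]
    · nlinarith [hnonneg x hx, le_max_left ζ₁ 0]
  refine ⟨ε / 4, by positivity, ε * ζ₂ ^ 2, by positivity, fun ζ hζ => ?_⟩
  have hint : ∫ x in (0 : ℝ)..ζ, (ε * x - ε * ζ₂) = ε / 2 * ζ ^ 2 - ε * ζ₂ * ζ := by
    rw [intervalIntegral.integral_sub ((continuous_const_mul ε).intervalIntegrable _ _)
      intervalIntegrable_const,
      intervalIntegral.integral_const_mul, integral_id, intervalIntegral.integral_const]
    simp only [smul_eq_mul]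
    ring
  have hmono : ∫ x in (0 : ℝ)..ζ, (ε * x - ε * ζ₂) ≤ ∫ x in (0 : ℝ)..ζ, h x :=
    intervalIntegral.integral_mono_on hζ
      (((continuous_const_mul ε).sub continuous_const).intervalIntegrable _ _)
      ((hcont.mono (by simp [uIcc_of_le hζ, Icc_subset_Ici_self])).intervalIntegrable)
      fun x hx => hlow x hx.1
  nlinarith [sq_nonneg (ζ / 2 - ζ₂)]

theorem mul_mul_sub_mul_sq_le {a c G ζ u v : ℝ} (ha : 0 < a) (hG : a * ζ ^ 2 - c ≤ G) :
    ζ * u * v - G * u ^ 2 ≤ v ^ 2 / (4 * a) + c * u ^ 2 := by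
  have hamgm : ζ * u * v - a * ζ ^ 2 * u ^ 2 ≤ v ^ 2 / (4 * a) := by
    rw [le_div_iff₀ (by positivity)]
    nlinarith [sq_nonneg (2 * a * ζ * u - v)]
  nlinarith [mul_le_mul_of_nonneg_right hG (sq_nonneg u)]

theorem LipschitzOnWith.sq_sub_le {f : ℝ → ℝ} {K : NNReal} {s : Set ℝ}
    (hf : LipschitzOnWith K f s) {x y : ℝ} (hx : x ∈ s) (hy : y ∈ s) :
    (f x - f y) ^ 2 ≤ K ^ 2 * (x - y) ^ 2 := by
  have := hf.dist_le_mul x hx y hy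
  rw [Real.dist_eq, Real.dist_eq] at this
  rw [← sq_abs, ← sq_abs (x - y), ← mul_pow]
  gcongr

theorem LipschitzOnWith.sub_mul_sub_le {f : ℝ → ℝ} {K : NNReal} {s : Set ℝ}
    (hf : LipschitzOnWith K f s) {x y : ℝ} (hx : x ∈ s) (hy : y ∈ s) :
    (f x - f y) * (x - y) ≤ K * (x - y) ^ 2 := by
  have := hf.dist_le_mul x hx y hy
  rw [Real.dist_eq, Real.dist_eq] at this
  calc (f x - f y) * (x - y) ≤ |f x - f y| * |x - y| := by rw [← abs_mul]; exact le_abs_self _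
    _ ≤ K * |x - y| * |x - y| := by gcongr
    _ = K * (x - y) ^ 2 := by rw [mul_assoc, ← sq, sq_abs]

theorem sq_mul_sub_sq_mul_le_of_posSemidef {n : Type*} [Fintype n] [DecidableEq n]
    {X Y : Matrix n n ℝ} {c : ℝ}
    (h : (c • Matrix.fromBlocks (1 : Matrix n n ℝ) (-1) (-1) 1 -
      Matrix.fromBlocks X 0 0 (-Y)).PosSemidef) (i : n) (s t : ℝ) :
    s ^ 2 * X i i - t ^ 2 * Y i i ≤ c * (s - t) ^ 2 := by
  have := h.dotProduct_mulVec_nonneg (Sum.elim (Pi.single i s) (Pi.single i t))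
  simp [Matrix.fromBlocks_mulVec, Matrix.sub_mulVec, Matrix.smul_mulVec,
    Matrix.mulVec_single] at this
  linarith

theorem EuclideanSpace.sq_apply_le_norm_sq {n : Type*} [Fintype n] (x : EuclideanSpace ℝ n)
    (i : n) : x i ^ 2 ≤ ‖x‖ ^ 2 := by
  simpa using pow_le_pow_left₀ (norm_nonneg _) (PiLp.norm_apply_le x i) 2

noncomputable def execHamiltonianObjective (σ b g : ℝ → ℝ) (z p : EuclideanSpace ℝ (Fin 3))
    (X : Matrix (Fin 3) (Fin 3) ℝ) (ζ : ℝ) : ℝ :=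
  1 / 2 * σ (z 2) ^ 2 * X 2 2 + b (z 2) * p 2 + ζ * (z 2 * p 0 - p 1) - g ζ * z 2 * p 2

section Hamiltonian

variable {σ b g : ℝ → ℝ} {z z' p : EuclideanSpace ℝ (Fin 3)} {X Y : Matrix (Fin 3) (Fin 3) ℝ}

theorem execHamiltonian_eq_coe
    (hbdd : BddAbove (execHamiltonianObjective σ b g z p X '' Ici 0)) :
    execHamiltonian σ b g z p X =
      ((-sSup (execHamiltonianObjective σ b g z p X '' Ici 0) : ℝ) : EReal) := by
  rw [EReal.coe_neg, ← EReal.sSup_image_coe _ nonempty_Ici hbdd]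
  rfl

theorem execHamiltonianObjective_nonpos_of_nonneg (h : 0 ≤ execHamiltonian σ b g z p X) {ζ : ℝ}
    (hζ : 0 ≤ ζ) : execHamiltonianObjective σ b g z p X ζ ≤ 0 := by
  have hsup : sSup ((fun ζ => (execHamiltonianObjective σ b g z p X ζ : EReal)) '' Ici 0) ≤ 0 :=
    (EReal.le_neg_of_le_neg h).trans_eq neg_zero
  exact EReal.coe_nonpos.1 ((le_sSup (mem_image_of_mem _ (mem_Ici.2 hζ))).trans hsup)

theorem execHamiltonianObjective_sub (α ζ : ℝ) :
    execHamiltonianObjective σ b g z (α • (z - z')) X ζ -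
        execHamiltonianObjective σ b g z' (α • (z - z')) Y ζ =
      1 / 2 * (σ (z 2) ^ 2 * X 2 2 - σ (z' 2) ^ 2 * Y 2 2) +
        α * ((b (z 2) - b (z' 2)) * (z 2 - z' 2) +
          (ζ * (z 2 - z' 2) * (z 0 - z' 0) - g ζ * (z 2 - z' 2) ^ 2)) := by
  simp only [execHamiltonianObjective, PiLp.smul_apply, PiLp.sub_apply, smul_eq_mul]
  ring

theorem execHamiltonianObjective_le_add {Kσ Kb : NNReal} {a c α ζ : ℝ}
    (hσ : LipschitzOnWith Kσ σ (Ici 0)) (hb : LipschitzOnWith Kb b (Ici 0))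
    (ha : 0 < a) (hg : ∀ ζ ≥ (0 : ℝ), a * ζ ^ 2 - c ≤ g ζ) (hc : 0 ≤ c) (hα : 0 ≤ α)
    (hz : 0 ≤ z 2) (hz' : 0 ≤ z' 2)
    (hXY : ((3 * α) • Matrix.fromBlocks (1 : Matrix (Fin 3) (Fin 3) ℝ) (-1) (-1) 1 -
      Matrix.fromBlocks X 0 0 (-Y)).PosSemidef) (hζ : 0 ≤ ζ) :
    execHamiltonianObjective σ b g z (α • (z - z')) X ζ ≤
      execHamiltonianObjective σ b g z' (α • (z - z')) Y ζ +
        (3 / 2 * Kσ ^ 2 + Kb + c + 1 / (4 * a)) * α * ‖z - z'‖ ^ 2 := by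
  have hdiffusion :
      σ (z 2) ^ 2 * X 2 2 - σ (z' 2) ^ 2 * Y 2 2 ≤ 3 * α * (Kσ ^ 2 * (z 2 - z' 2) ^ 2) :=
    (sq_mul_sub_sq_mul_le_of_posSemidef hXY 2 _ _).trans (by gcongr; exact hσ.sq_sub_le hz hz')
  have hdrift := hb.sub_mul_sub_le hz hz'
  have hcontrol := mul_mul_sub_mul_sq_le (u := z 2 - z' 2) (v := z 0 - z' 0) ha (hg ζ hζ)
  have hd₀ : (z 0 - z' 0) ^ 2 ≤ ‖z - z'‖ ^ 2 := EuclideanSpace.sq_apply_le_norm_sq (z - z') 0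
  have hd₂ : (z 2 - z' 2) ^ 2 ≤ ‖z - z'‖ ^ 2 := EuclideanSpace.sq_apply_le_norm_sq (z - z') 2
  rw [← sub_le_iff_le_add', execHamiltonianObjective_sub]
  calc 1 / 2 * (σ (z 2) ^ 2 * X 2 2 - σ (z' 2) ^ 2 * Y 2 2) +
        α * ((b (z 2) - b (z' 2)) * (z 2 - z' 2) +
          (ζ * (z 2 - z' 2) * (z 0 - z' 0) - g ζ * (z 2 - z' 2) ^ 2))
      ≤ 1 / 2 * (3 * α * (Kσ ^ 2 * (z 2 - z' 2) ^ 2)) +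
        α * (Kb * (z 2 - z' 2) ^ 2 + ((z 0 - z' 0) ^ 2 / (4 * a) + c * (z 2 - z' 2) ^ 2)) := by
        gcongr
    _ = α * ((3 / 2 * Kσ ^ 2 + Kb + c) * (z 2 - z' 2) ^ 2 + 1 / (4 * a) * (z 0 - z' 0) ^ 2) := by
        ring
    _ ≤ α * ((3 / 2 * Kσ ^ 2 + Kb + c) * ‖z - z'‖ ^ 2 + 1 / (4 * a) * ‖z - z'‖ ^ 2) := by
        gcongr
    _ = (3 / 2 * Kσ ^ 2 + Kb + c + 1 / (4 * a)) * α * ‖z - z'‖ ^ 2 := by ring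

end Hamiltonian

theorem hamiltonian_structure_condition_general (Φ₀ : ℝ)
    (σ b h : ℝ → ℝ)
    (hσ : ∃ K : NNReal, LipschitzOnWith K σ (Set.Ici 0))
    (hb : ∃ K : NNReal, LipschitzOnWith K b (Set.Ici 0))
    (hh_cont : ContinuousOn h (Set.Ici 0))
    (hh_nonneg : ∀ x ≥ (0 : ℝ), 0 ≤ h x)
    (hh_liminf : ∃ ε > (0 : ℝ), ∃ ζ₁ : ℝ, ∀ ζ ≥ ζ₁, ε * ζ ≤ h ζ)
    (g : ℝ → ℝ) (hg : ∀ ζ : ℝ, g ζ = ∫ x in (0 : ℝ)..ζ, h x) :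
    ∃ C > (0 : ℝ), ∀ α : ℝ, 1 < α →
      ∀ z z' : EuclideanSpace ℝ (Fin 3),
      z 1 ∈ Set.Ioo (0 : ℝ) Φ₀ → z 2 ∈ Set.Ioi (0 : ℝ) →
      z' 1 ∈ Set.Ioo (0 : ℝ) Φ₀ → z' 2 ∈ Set.Ioi (0 : ℝ) →
      ∀ X Y : Matrix (Fin 3) (Fin 3) ℝ, X.IsSymm → Y.IsSymm →
      (0 : EReal) ≤ execHamiltonian σ b g z' (α • (z - z')) Y →
      (Matrix.fromBlocks X 0 0 (-Y) +
        (3 * α) • (1 : Matrix (Fin 3 ⊕ Fin 3) (Fin 3 ⊕ Fin 3) ℝ)).PosSemidef →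
      ((3 * α) • Matrix.fromBlocks (1 : Matrix (Fin 3) (Fin 3) ℝ) (-1) (-1) 1 -
        Matrix.fromBlocks X 0 0 (-Y)).PosSemidef →
      ⊥ < execHamiltonian σ b g z (α • (z - z')) X ∧
      execHamiltonian σ b g z' (α • (z - z')) Y -
          execHamiltonian σ b g z (α • (z - z')) X ≤
        ((C * (α * ‖z - z'‖ ^ 2 + ‖z - z'‖) : ℝ) : EReal) := by
  obtain ⟨Kσ, hKσ⟩ := hσ
  obtain ⟨Kb, hKb⟩ := hb
  obtain ⟨a, ha, c, hc, hg_low⟩ :=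
    exists_quadratic_lower_bound_intervalIntegral hh_cont hh_nonneg hh_liminf
  set C : ℝ := 3 / 2 * Kσ ^ 2 + Kb + c + 1 / (4 * a) with hC_def
  have hC : 0 < C := by rw [hC_def]; positivity
  refine ⟨C, hC, fun α hα z z' _ hz _ hz' X Y _ _ hF' _ hXY => ?_⟩
  set f := execHamiltonianObjective σ b g z (α • (z - z')) X
  set f' := execHamiltonianObjective σ b g z' (α • (z - z')) Y
  have hf'_nonpos : ∀ ζ ∈ Ici 0, f' ζ ≤ 0 := fun ζ hζ =>
    execHamiltonianObjective_nonpos_of_nonneg hF' hζ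
  have hf_le : ∀ ζ ∈ Ici 0, f ζ ≤ f' ζ + C * α * ‖z - z'‖ ^ 2 := fun ζ hζ =>
    execHamiltonianObjective_le_add hKσ hKb ha (fun ζ hζ => hg ζ ▸ hg_low ζ hζ) hc
      (by linarith) hz.le hz'.le hXY hζ
  have hbdd' : BddAbove (f' '' Ici 0) := ⟨0, forall_mem_image.2 hf'_nonpos⟩
  have hbdd : BddAbove (f '' Ici 0) := ⟨C * α * ‖z - z'‖ ^ 2, forall_mem_image.2 fun ζ hζ =>
    (hf_le ζ hζ).trans (by linarith [hf'_nonpos ζ hζ])⟩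
  rw [execHamiltonian_eq_coe hbdd, execHamiltonian_eq_coe hbdd', ← EReal.coe_sub]
  refine ⟨EReal.bot_lt_coe _, EReal.coe_le_coe_iff.2 ?_⟩
  have := csSup_image_le_csSup_image_add nonempty_Ici hbdd' hf_le
  linarith [mul_nonneg hC.le (norm_nonneg (z - z'))]

/-- the structure condition for the HJB Hamiltonian `F` on
`U = ℝ × (0,Φ₀) × (0,∞)`: there is a constant `C > 0` depending only on `σ̂`, `b̂`
and `g` such that, for `α > 1`, `z, z' ∈ U` and symmetric matrices `X, Y` with
`F(z', α(z-z'), Y) ≥ 0` and `-3α I₆ ≤ [[X,0],[0,-Y]] ≤ 3α [[I,-I],[-I,I]]`, one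
has `F(z, α(z-z'), X) > -∞` and
`F(z', α(z-z'), Y) - F(z, α(z-z'), X) ≤ C (α |z-z'|² + |z-z'|)`. -/
theorem hamiltonian_structure_condition (Φ₀ : ℝ) (hΦ₀ : 0 < Φ₀)
    (σ b h : ℝ → ℝ)
    (hσ : ∃ K : NNReal, LipschitzOnWith K σ (Set.Ici 0))
    (hb : ∃ K : NNReal, LipschitzOnWith K b (Set.Ici 0))
    (hh_cont : ContinuousOn h (Set.Ici 0))
    (hh_mono : StrictMonoOn h (Set.Ici 0))
    (hh_nonneg : ∀ x ≥ (0 : ℝ), 0 ≤ h x)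
    (hh_top : Filter.Tendsto h Filter.atTop Filter.atTop)
    (hh_liminf : ∃ ε > (0 : ℝ), ∃ ζ₁ : ℝ, ∀ ζ ≥ ζ₁, ε * ζ ≤ h ζ)
    (g : ℝ → ℝ) (hg : ∀ ζ : ℝ, g ζ = ∫ x in (0 : ℝ)..ζ, h x) :
    ∃ C > (0 : ℝ), ∀ α : ℝ, 1 < α →
      ∀ z z' : EuclideanSpace ℝ (Fin 3),
      z 1 ∈ Set.Ioo (0 : ℝ) Φ₀ → z 2 ∈ Set.Ioi (0 : ℝ) →
      z' 1 ∈ Set.Ioo (0 : ℝ) Φ₀ → z' 2 ∈ Set.Ioi (0 : ℝ) →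
      ∀ X Y : Matrix (Fin 3) (Fin 3) ℝ, X.IsSymm → Y.IsSymm →
      (0 : EReal) ≤ execHamiltonian σ b g z' (α • (z - z')) Y →
      (Matrix.fromBlocks X 0 0 (-Y) +
        (3 * α) • (1 : Matrix (Fin 3 ⊕ Fin 3) (Fin 3 ⊕ Fin 3) ℝ)).PosSemidef →
      ((3 * α) • Matrix.fromBlocks (1 : Matrix (Fin 3) (Fin 3) ℝ) (-1) (-1) 1 -
        Matrix.fromBlocks X 0 0 (-Y)).PosSemidef →
      ⊥ < execHamiltonian σ b g z (α • (z - z')) X ∧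
      execHamiltonian σ b g z' (α • (z - z')) Y -
          execHamiltonian σ b g z (α • (z - z')) X ≤
        ((C * (α * ‖z - z'‖ ^ 2 + ‖z - z'‖) : ℝ) : EReal) :=
  hamiltonian_structure_condition_general Φ₀ σ b h hσ hb hh_cont hh_nonneg hh_liminf g hg
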